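/- Let A be a C*-algebra and M a Hilbert C*-module over A. Let f : M → A be a bounded additive anti-A-linear map (f(m·a) = a*·f(m)) and k ∈ M, and define T : M → M by T(m) = k·(f(m))*. Then T is an A-operator and ⟪T m, n⟫ = f(m)·⟪k, n⟫ for all m, n ∈ M. Moreover, if f has the property that for every a ∈ A, the existence of m₀ ∈ M with f(m)·a = ⟪m, m₀⟫ for all m ∈ M implies a = 0, and if k ≠ 0, then T is not J-adjointable for any essential ideal J ⊆ A. -/

import Mathlib

open scoped RightActions

/-- The Hilbert C⋆-module class as it stood in Mathlib of December 2024 (right `A`-action). -/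
class CStarModuleRight (A E : Type*) [NonUnitalSemiring A] [StarRing A]
    [Module ℂ A] [AddCommGroup E] [Module ℂ E] [PartialOrder A] [SMul Aᵐᵒᵖ E] [Norm A] [Norm E]
    extends Inner A E where
  inner_add_right {x} {y} {z} : inner x (y + z) = inner x y + inner x z
  inner_self_nonneg {x} : 0 ≤ inner x x
  inner_self {x} : inner x x = 0 ↔ x = 0
  inner_op_smul_right {a : A} {x y : E} : inner x (y <• a) = inner x y * a
  inner_smul_right_complex {z : ℂ} {x} {y} : inner x (z • y) = z • inner x y
  star_inner x y : star (inner x y) = inner y x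
  norm_eq_sqrt_norm_inner_self x : ‖x‖ = √‖inner x x‖

/-!
Everything follows from `⟪k · (f m)*, n⟫ = f m · ⟪k, n⟫`. Taking `n = k`, `J`-adjointability of `T`
says that for each `x ∈ J` the functional `m ↦ f m · (⟪k, k⟫ · x)` is represented by an element
of `M`, so `⟪k, k⟫ · x = 0` by the hypothesis on `f`; as `J` is essential, `⟪k, k⟫ = 0`.
-/

namespace CStarModuleRight

section Algebraic

variable {A : Type*} [NonUnitalRing A] [StarRing A] [Module ℂ A] [PartialOrder A] [Norm A]
  {E : Type*} [AddCommGroup E] [Module ℂ E] [SMul Aᵐᵒᵖ E] [Norm E] [CStarModuleRight A E]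

theorem inner_sub_right (x y z : E) : inner A x (y - z) = inner A x y - inner A x z := by
  rw [eq_sub_iff_add_eq, ← inner_add_right, sub_add_cancel]

theorem inner_add_left (x y z : E) : inner A (x + y) z = inner A x z + inner A y z := by
  rw [← star_inner z, inner_add_right, star_add, star_inner, star_inner]

theorem inner_op_smul_left (a : A) (x y : E) : inner A (x <• a) y = star a * inner A x y := by
  rw [← star_inner y, inner_op_smul_right, star_mul, star_inner]

theorem ext_inner_left {x y : E} (h : ∀ z : E, inner A z x = inner A z y) : x = y := by
  rw [← sub_eq_zero, ← inner_self (A := A), inner_sub_right, h, sub_self]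

theorem op_smul_add (x : E) (a b : A) : x <• (a + b) = x <• a + x <• b :=
  ext_inner_left (A := A) fun z => by simp only [inner_add_right, inner_op_smul_right, mul_add]

theorem op_smul_mul (x : E) (a b : A) : x <• (a * b) = x <• a <• b :=
  ext_inner_left (A := A) fun z => by simp only [inner_op_smul_right, mul_assoc]

end Algebraic

theorem norm_op_smul_le {A : Type*} [NonUnitalNormedRing A] [StarRing A] [NormedStarGroup A]
    [Module ℂ A] [PartialOrder A] {E : Type*} [NormedAddCommGroup E] [Module ℂ E] [SMul Aᵐᵒᵖ E]
    [CStarModuleRight A E] (x : E) (a : A) : ‖x <• a‖ ≤ ‖x‖ * ‖a‖ := by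
  have norm_sq (y : E) : ‖y‖ ^ 2 = ‖inner A y y‖ := by
    rw [norm_eq_sqrt_norm_inner_self (A := A), Real.sq_sqrt (norm_nonneg _)]
  rw [← sq_le_sq₀ (norm_nonneg _) (by positivity)]
  calc ‖x <• a‖ ^ 2 = ‖star a * inner A x x * a‖ := by
        rw [norm_sq, inner_op_smul_right, inner_op_smul_left]
    _ ≤ ‖star a‖ * ‖inner A x x‖ * ‖a‖ := norm_mul₃_le
    _ = (‖x‖ * ‖a‖) ^ 2 := by rw [norm_star, mul_pow, norm_sq]; ring

end CStarModuleRight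

open CStarModuleRight in
theorem rankOne_functional_not_JAdjointable_general
    {A : Type*} [NonUnitalCStarAlgebra A] [PartialOrder A]
    {E : Type*} [NormedAddCommGroup E] [Module ℂ E] [SMul Aᵐᵒᵖ E] [CStarModuleRight A E]
    (f : E → A)
    (hf_add : ∀ m n : E, f (m + n) = f m + f n)
    (hf_bdd : ∃ C : ℝ, ∀ m : E, ‖f m‖ ≤ C * ‖m‖)
    (hf_antilin : ∀ (m : E) (a : A), f (m <• a) = star a * f m)
    (k : E) (T : E → E) (hT_def : ∀ m : E, T m = k <• star (f m)) :
    ((∀ m n : E, T (m + n) = T m + T n) ∧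
     (∃ C : ℝ, ∀ m : E, ‖T m‖ ≤ C * ‖m‖) ∧
     (∀ (m : E) (a : A), T (m <• a) = T m <• a) ∧
     (∀ m n : E, (inner A (T m) n : A) = f m * inner A k n)) ∧
    ((∀ a : A, (∃ m₀ : E, ∀ m : E, f m * a = (inner A m m₀ : A)) → a = 0) → k ≠ 0 →
      ∀ J : TwoSidedIdeal A, IsClosed (J : Set A) →
        (∀ a : A, (∀ x ∈ J, a * x = 0) → a = 0) →
        ¬ (∀ (n : E), ∀ x ∈ J, ∃ m₀ : E, ∀ m : E,
            (inner A (T m) n : A) * x = inner A m m₀)) := by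
  have inner_T (m n : E) : inner A (T m) n = f m * inner A k n := by
    rw [hT_def, inner_op_smul_left, star_star]
  refine ⟨⟨fun m n => ?_, ?_, fun m a => ?_, inner_T⟩, ?_⟩
  · simp only [hT_def, hf_add, star_add, op_smul_add]
  · obtain ⟨C, hC⟩ := hf_bdd
    refine ⟨‖k‖ * C, fun m => ?_⟩
    calc ‖T m‖ ≤ ‖k‖ * ‖f m‖ := by rw [hT_def, ← norm_star (f m)]; exact norm_op_smul_le k _
      _ ≤ ‖k‖ * C * ‖m‖ := by rw [mul_assoc]; exact mul_le_mul_of_nonneg_left (hC m) (norm_nonneg k)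
  · simp only [hT_def, hf_antilin, star_mul, star_star, CStarModuleRight.op_smul_mul]
  · intro hrep hk J _ hJ_ess hT_adj
    refine hk (inner_self.mp (hJ_ess _ fun x hx => hrep _ ?_))
    obtain ⟨m₀, hm₀⟩ := hT_adj k x hx
    exact ⟨m₀, fun m => by rw [← mul_assoc, ← inner_T, hm₀]⟩

/-- Let `f : M → A` be a bounded additive anti-`A`-linear functional on a Hilbert C*-module `M`
over `A`, let `k ∈ M`, and define `T : M → M` by `T m = k · (f m)*`. Then `T` is an `A`-operator
with `⟪T m, n⟫ = f m · ⟪k, n⟫` for all `m, n`. Moreover, if no nonzero `a ∈ A` is such that the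
functional `m ↦ f m · a` is represented by an element of `M`, and `k ≠ 0`, then `T` is not
`J`-adjointable for any essential closed two-sided ideal `J ⊆ A`. -/
theorem rankOne_functional_not_JAdjointable
    {A : Type*} [NonUnitalCStarAlgebra A] [PartialOrder A] [StarOrderedRing A]
    {E : Type*} [NormedAddCommGroup E] [Module ℂ E] [SMul Aᵐᵒᵖ E] [CStarModuleRight A E]
    [CompleteSpace E]
    (f : E → A)
    (hf_add : ∀ m n : E, f (m + n) = f m + f n)
    (hf_bdd : ∃ C : ℝ, ∀ m : E, ‖f m‖ ≤ C * ‖m‖)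
    (hf_antilin : ∀ (m : E) (a : A), f (m <• a) = star a * f m)
    (k : E) (T : E → E) (hT_def : ∀ m : E, T m = k <• star (f m)) :
    ((∀ m n : E, T (m + n) = T m + T n) ∧
     (∃ C : ℝ, ∀ m : E, ‖T m‖ ≤ C * ‖m‖) ∧
     (∀ (m : E) (a : A), T (m <• a) = T m <• a) ∧
     (∀ m n : E, (inner A (T m) n : A) = f m * inner A k n)) ∧
    ((∀ a : A, (∃ m₀ : E, ∀ m : E, f m * a = (inner A m m₀ : A)) → a = 0) → k ≠ 0 →
      ∀ J : TwoSidedIdeal A, IsClosed (J : Set A) →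
        (∀ a : A, (∀ x ∈ J, a * x = 0) → a = 0) →
        ¬ (∀ (n : E), ∀ x ∈ J, ∃ m₀ : E, ∀ m : E,
            (inner A (T m) n : A) * x = inner A m m₀)) :=
  rankOne_functional_not_JAdjointable_general f hf_add hf_bdd hf_antilin k T hT_def
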